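/- arXiv:2411.06405 — 7 statements merged into one kernel-verified Lean document; each statement's English description precedes it below -/
import Mathlib

section
/- The (k,h)-truss of a finite simple graph G is unique: if S₁ and S₂ are subgraphs of G in each of which every edge has h-support at least k-2 (computed within the subgraph), then in the union subgraph S₁ ∪ S₂ every edge also has h-support at least k-2 (computed within S₁ ∪ S₂); consequently there is a unique maximal subgraph of G in which every edge has h-support at least k-2. -/
/-- The H-index of a finite multiset of natural numbers: the largest `y` such that
at least `y` elements of the multiset are `≥ y` (`0` for the empty multiset). -/
noncomputable def hIndex (S : Multiset ℕ) : ℕ :=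
  sSup {y : ℕ | y ≤ (S.filter (fun x => y ≤ x)).card}

/-- The set of common `h`-neighbors of an edge `e` in `G`: the vertices `w`, distinct from
both endpoints of `e`, that are within distance `h` (i.e. joined by a walk of length `≤ h`)
of both endpoints of `e`. -/
def commonHNbrs {V : Type*} (G : SimpleGraph V) (h : ℕ) (e : Sym2 V) : Set V :=
  {w | ∀ x ∈ e, w ≠ x ∧ ∃ p : G.Walk x w, p.length ≤ h}

/-- The `h`-support of an edge `e` in `G`: the number of common `h`-neighbors of `e`. -/
noncomputable def hSupport {V : Type*} (G : SimpleGraph V) (h : ℕ) (e : Sym2 V) : ℕ :=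
  (commonHNbrs G h e).ncard

/-- The `h`-hop reachable path key of `a, b` with respect to an edge-value function `F`:
the maximum over all (nontrivial) paths `p` from `a` to `b` of length `≤ h` of the minimum
of `F` over the edges of `p`. -/
noncomputable def pathKey {V : Type*} (G : SimpleGraph V) (h : ℕ) (F : Sym2 V → ℕ)
    (a b : V) : ℕ :=
  sSup {m | ∃ p : G.Walk a b, 0 < p.length ∧ p.length ≤ h ∧
    m = sInf {x | ∃ f ∈ p.edges, x = F f}}

/-- For an edge `e = (u,v)` and a vertex `w`, the value `min (P(u,w), P(v,w))` where `P`
is the path key with respect to `F`. -/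
noncomputable def edgeKey {V : Type*} (G : SimpleGraph V) (h : ℕ) (F : Sym2 V → ℕ)
    (e : Sym2 V) (w : V) : ℕ :=
  sInf {m | ∃ x ∈ e, m = pathKey G h F x w}

/-- The higher-order H-index iterates: `HSup G h 0 e = hSupport G h e`, and
`HSup G h (n+1) e = H({min (P(u,w), P(v,w)) : w a common h-neighbor of e})` where `P` is
the path key with respect to `HSup G h n`. -/
noncomputable def HSup {V : Type*} [Fintype V] (G : SimpleGraph V) (h : ℕ) :
    ℕ → Sym2 V → ℕ
  | 0 => fun e => hSupport G h e
  | n + 1 => fun e =>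
      hIndex ((commonHNbrs G h e).toFinite.toFinset.val.map (edgeKey G h (HSup G h n) e))

/-- A graph `S` satisfies the `(k,h)`-truss property if every edge of `S` has `h`-support
at least `k - 2`, computed within `S`. -/
def KHTrussProp {V : Type*} (S : SimpleGraph V) (h k : ℕ) : Prop :=
  ∀ e ∈ S.edgeSet, k ≤ hSupport S h e + 2

/-- `S` is the `(k,h)`-truss of `G`: a maximal subgraph of `G` each of whose edges has
`h`-support at least `k-2` within `S`. -/
def IsKHTruss {V : Type*} (G S : SimpleGraph V) (h k : ℕ) : Prop :=
  S ≤ G ∧ KHTrussProp S h k ∧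
    ∀ T : SimpleGraph V, T ≤ G → KHTrussProp T h k → S ≤ T → T = S

/-- The `h`-trussness `t(e,h)` of an edge `e` of `G`: the largest `k` such that some
`(k,h)`-truss of `G` contains `e`. -/
noncomputable def hTrussness {V : Type*} (G : SimpleGraph V) (h : ℕ) (e : Sym2 V) : ℕ :=
  sSup {k | ∃ S : SimpleGraph V, IsKHTruss G S h k ∧ e ∈ S.edgeSet}

lemma hSupport_mono {V : Type*} [Fintype V] {S T : SimpleGraph V} (hST : S ≤ T)
    (h : ℕ) (e : Sym2 V) : hSupport S h e ≤ hSupport T h e := by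
  apply Set.ncard_le_ncard _ (Set.toFinite _)
  intro w hw x hx
  obtain ⟨hne, p, hp⟩ := hw x hx
  exact ⟨hne, p.mapLe hST, by simpa using hp⟩

/-- the union of two subgraphs satisfying the `(k,h)`-truss property again
satisfies it, and consequently the `(k,h)`-truss of `G` is unique. -/
theorem khTruss_union_and_unique {V : Type*} [Fintype V] (G : SimpleGraph V) (h k : ℕ)
    (hh : 1 ≤ h) (hk : 2 ≤ k) :
    (∀ S₁ S₂ : SimpleGraph V, S₁ ≤ G → S₂ ≤ G → KHTrussProp S₁ h k → KHTrussProp S₂ h k →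
      KHTrussProp (S₁ ⊔ S₂) h k) ∧
    (∃! S : SimpleGraph V, IsKHTruss G S h k) := by
  have key : ∀ S : SimpleGraph V, S ≤ G → KHTrussProp S h k →
      ∀ T : SimpleGraph V, S ≤ T → KHTrussProp S h k → ∀ e ∈ S.edgeSet, k ≤ hSupport T h e + 2 := by
    intro S _ hS T hST _ e he
    exact le_trans (hS e he) (by have := hSupport_mono hST h e; omega)
  constructor
  · intro S₁ S₂ h₁ h₂ hp₁ hp₂ e he
    induction e using Sym2.ind with
    | _ a b =>
      rw [SimpleGraph.mem_edgeSet, SimpleGraph.sup_adj] at he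
      rcases he with he | he
      · exact key S₁ h₁ hp₁ _ le_sup_left hp₁ _ he
      · exact key S₂ h₂ hp₂ _ le_sup_right hp₂ _ he
  · set s : Set (SimpleGraph V) := {T | T ≤ G ∧ KHTrussProp T h k} with hs
    set S := sSup s with hSdef
    have hSG : S ≤ G := sSup_le (fun T hT => hT.1)
    have hSP : KHTrussProp S h k := by
      intro e he
      induction e using Sym2.ind with
      | _ a b =>
        rw [SimpleGraph.mem_edgeSet, hSdef, SimpleGraph.sSup_adj] at he
        obtain ⟨T, hTs, hadj⟩ := he
        exact key T hTs.1 hTs.2 S (le_sSup hTs) hTs.2 _ hadj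
    have hmax : ∀ T : SimpleGraph V, T ≤ G → KHTrussProp T h k → S ≤ T → T = S := by
      intro T hTG hTP hST
      exact le_antisymm (le_sSup (show T ∈ s from ⟨hTG, hTP⟩)) hST
    refine ⟨S, ⟨hSG, hSP, hmax⟩, ?_⟩
    intro S' hS'
    have h1 : S' ≤ S := le_sSup ⟨hS'.1, hS'.2.1⟩
    exact (hS'.2.2 S hSG hSP h1).symm
end

section
/- (Monotonicity) For every finite simple graph G, integer h ≥ 1, natural number n, and edge e of G, the higher-order H-index iterates satisfy H^(n)sup(e) ≥ H^(n+1)sup(e). -/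
lemma countP_mono_of_mem {α : Type*} {p q : α → Prop} [DecidablePred p] [DecidablePred q]
    {M : Multiset α} (h : ∀ x ∈ M, p x → q x) : M.countP p ≤ M.countP q := by
  induction M using Multiset.induction with
  | empty => simp
  | cons a s ih =>
    simp only [Multiset.countP_cons]
    refine add_le_add (ih fun x hx => h x (Multiset.mem_cons_of_mem hx)) ?_
    by_cases hp : p a
    · simp [hp, h a (Multiset.mem_cons_self a s) hp]
    · simp [hp]

lemma hIndex_le_card (S : Multiset ℕ) : hIndex S ≤ Multiset.card S := by
  apply csSup_le ⟨0, by simp⟩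
  intro y hy
  exact hy.trans (Multiset.card_le_card (Multiset.filter_le _ _))

lemma hIndex_map_mono {α : Type*} (M : Multiset α) {f g : α → ℕ}
    (hfg : ∀ x ∈ M, g x ≤ f x) : hIndex (M.map g) ≤ hIndex (M.map f) := by
  apply csSup_le_csSup
  · exact ⟨Multiset.card (M.map f), fun y hy =>
      hy.trans (Multiset.card_le_card (Multiset.filter_le _ _))⟩
  · exact ⟨0, by simp⟩
  · intro y hy
    simp only [Set.mem_setOf_eq] at hy ⊢
    refine le_trans hy ?_
    rw [← Multiset.countP_eq_card_filter, ← Multiset.countP_eq_card_filter,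
      Multiset.countP_map, Multiset.countP_map, ← Multiset.countP_eq_card_filter,
      ← Multiset.countP_eq_card_filter]
    exact countP_mono_of_mem (fun x hx h1 => le_trans h1 (hfg x hx))

lemma walk_edges_ne_nil {V : Type*} {G : SimpleGraph V} {a b : V} {p : G.Walk a b}
    (hp : 0 < p.length) : ∃ f, f ∈ p.edges := by
  rcases List.exists_mem_of_ne_nil p.edges (by
    intro hnil
    rw [← SimpleGraph.Walk.length_edges, hnil] at hp
    simp at hp) with ⟨f, hf⟩
  exact ⟨f, hf⟩

lemma pathKey_mono {V : Type*} [Fintype V] (G : SimpleGraph V) (h : ℕ) {F F' : Sym2 V → ℕ}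
    (hF : ∀ f ∈ G.edgeSet, F' f ≤ F f) (a b : V) :
    pathKey G h F' a b ≤ pathKey G h F a b := by
  classical
  haveI : Fintype (Sym2 V) := Fintype.ofFinite _
  set B := Finset.univ.sup F with hB
  have hbdd : BddAbove {m | ∃ p : G.Walk a b, 0 < p.length ∧ p.length ≤ h ∧
      m = sInf {x | ∃ f ∈ p.edges, x = F f}} := by
    refine ⟨B, ?_⟩
    rintro m ⟨p, hp0, hph, rfl⟩
    obtain ⟨f0, hf0⟩ := walk_edges_ne_nil hp0
    exact le_trans (Nat.sInf_le ⟨f0, hf0, rfl⟩) (Finset.le_sup (Finset.mem_univ f0))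
  rcases Set.eq_empty_or_nonempty {m | ∃ p : G.Walk a b, 0 < p.length ∧ p.length ≤ h ∧
      m = sInf {x | ∃ f ∈ p.edges, x = F' f}} with hS | hS
  · rw [pathKey, hS, csSup_empty]
    exact Nat.zero_le _
  · apply csSup_le hS
    rintro m ⟨p, hp0, hph, rfl⟩
    obtain ⟨f0, hf0⟩ := walk_edges_ne_nil hp0
    have hne : {x | ∃ f ∈ p.edges, x = F f}.Nonempty := ⟨F f0, f0, hf0, rfl⟩
    have hle : sInf {x | ∃ f ∈ p.edges, x = F' f} ≤ sInf {x | ∃ f ∈ p.edges, x = F f} := by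
      obtain ⟨f1, hf1, heq⟩ := Nat.sInf_mem hne
      rw [heq]
      exact le_trans (Nat.sInf_le ⟨f1, hf1, rfl⟩)
        (hF f1 (p.edges_subset_edgeSet hf1))
    exact le_trans hle (le_csSup hbdd ⟨p, hp0, hph, rfl⟩)

lemma edgeKey_mono {V : Type*} [Fintype V] (G : SimpleGraph V) (h : ℕ) {F F' : Sym2 V → ℕ}
    (hF : ∀ f ∈ G.edgeSet, F' f ≤ F f) (e : Sym2 V) (w : V) :
    edgeKey G h F' e w ≤ edgeKey G h F e w := by
  have hne : {m | ∃ x ∈ e, m = pathKey G h F x w}.Nonempty :=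
    ⟨pathKey G h F e.out.1 w, e.out.1, Sym2.out_fst_mem e, rfl⟩
  obtain ⟨x, hx, heq⟩ := Nat.sInf_mem hne
  rw [edgeKey, edgeKey, heq]
  exact le_trans (Nat.sInf_le ⟨x, hx, rfl⟩) (pathKey_mono G h hF x w)

/-- Monotonicity: `H^(n)sup(e) ≥ H^(n+1)sup(e)` for every edge `e` of `G`. -/
theorem HSup_antitone {V : Type*} [Fintype V] (G : SimpleGraph V) (h : ℕ) (hh : 1 ≤ h)
    (n : ℕ) (e : Sym2 V) (he : e ∈ G.edgeSet) :
    HSup G h (n + 1) e ≤ HSup G h n e := by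
  clear he
  induction n generalizing e with
  | zero =>
    show hIndex _ ≤ hSupport G h e
    refine le_trans (hIndex_le_card _) ?_
    rw [Multiset.card_map]
    rw [hSupport, Set.ncard_eq_toFinset_card _ (commonHNbrs G h e).toFinite]
    exact le_refl _
  | succ n ih =>
    show hIndex (Multiset.map (edgeKey G h (HSup G h (n + 1)) e) _) ≤
      hIndex (Multiset.map (edgeKey G h (HSup G h n) e) _)
    exact hIndex_map_mono _ fun w _ =>
      edgeKey_mono G h (fun f hf => ih f) e w
end

section
/- For every finite simple graph G with at least one edge, integer h ≥ 1, and natural number n, every edge e of G satisfies H^(n)sup(e) ≥ sup_min(G,h), where sup_min(G,h) = min{sup_G(f,h) : f an edge of G} is the minimum h-support over all edges of G. -/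
lemma le_hIndex_of {S : Multiset ℕ} {k : ℕ} (hcard : k ≤ Multiset.card S)
    (hall : ∀ x ∈ S, k ≤ x) : k ≤ hIndex S := by
  apply le_csSup
  · exact ⟨Multiset.card S, fun y hy => le_trans hy (Multiset.card_le_card (Multiset.filter_le _ _))⟩
  · show k ≤ Multiset.card (S.filter fun x => k ≤ x)
    rwa [Multiset.filter_eq_self.mpr hall]

lemma le_pathKey_of {V : Type*} [Fintype V] (G : SimpleGraph V) (h k : ℕ) (F : Sym2 V → ℕ)
    (hF : ∀ f ∈ G.edgeSet, k ≤ F f) {a b : V} (p : G.Walk a b)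
    (hp0 : 0 < p.length) (hph : p.length ≤ h) : k ≤ pathKey G h F a b := by
  have hedges : ∀ (q : G.Walk a b), 0 < q.length →
      {x | ∃ f ∈ q.edges, x = F f}.Nonempty := by
    intro q hq
    have hne : q.edges ≠ [] := by
      intro hc
      rw [← SimpleGraph.Walk.length_edges, hc] at hq
      simp at hq
    obtain ⟨f, hf⟩ := List.exists_mem_of_ne_nil _ hne
    exact ⟨F f, f, hf, rfl⟩
  have hmem : sInf {x | ∃ f ∈ p.edges, x = F f} ∈
      {m | ∃ q : G.Walk a b, 0 < q.length ∧ q.length ≤ h ∧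
        m = sInf {x | ∃ f ∈ q.edges, x = F f}} := ⟨p, hp0, hph, rfl⟩
  have hkm : k ≤ sInf {x | ∃ f ∈ p.edges, x = F f} := by
    apply le_csInf (hedges p hp0)
    rintro x ⟨f, hfp, rfl⟩
    exact hF f (p.edges_subset_edgeSet hfp)
  refine hkm.trans (le_csSup ?_ hmem)
  refine BddAbove.mono ?_ ((Set.finite_univ.image F).bddAbove)
  rintro m ⟨q, hq0, hqh, rfl⟩
  obtain ⟨f, _, hf⟩ := Nat.sInf_mem (hedges q hq0)
  exact ⟨f, trivial, hf.symm⟩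

lemma HSup_ge_min_support_aux {V : Type*} [Fintype V] (G : SimpleGraph V) (h : ℕ)
    (n : ℕ) : ∀ e ∈ G.edgeSet, sInf {m | ∃ f ∈ G.edgeSet, m = hSupport G h f} ≤
      HSup G h n e := by
  induction n with
  | zero =>
    intro e he
    have hm : hSupport G h e ∈ {m | ∃ f ∈ G.edgeSet, m = hSupport G h f} := ⟨e, he, rfl⟩
    simpa [HSup] using Nat.sInf_le hm
  | succ n ih =>
    intro e he
    show sInf _ ≤ hIndex _
    apply le_hIndex_of
    · rw [Multiset.card_map]
      have : Multiset.card (commonHNbrs G h e).toFinite.toFinset.val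
          = hSupport G h e := by
        rw [hSupport, Set.ncard_eq_toFinset_card _ (commonHNbrs G h e).toFinite]
        rfl
      rw [this]
      exact Nat.sInf_le ⟨e, he, rfl⟩
    · intro x hx
      obtain ⟨w, hw, rfl⟩ := Multiset.mem_map.mp hx
      have hw' : w ∈ commonHNbrs G h e := by
        rw [← Set.Finite.mem_toFinset (commonHNbrs G h e).toFinite]
        exact hw
      apply le_csInf
      · obtain ⟨u, v⟩ := e
        exact ⟨pathKey G h (HSup G h n) u w, u, Sym2.mem_mk_left u v, rfl⟩
      · rintro m ⟨x, hxe, rfl⟩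
        obtain ⟨hneq, p, hp⟩ := hw' x hxe
        have hp0 : 0 < p.length := by
          rcases Nat.eq_zero_or_pos p.length with h0 | h0
          · exact absurd (SimpleGraph.Walk.eq_of_length_eq_zero h0).symm hneq
          · exact h0
        exact le_pathKey_of G h _ (HSup G h n) ih p hp0 hp

/-- `H^(n)sup(e) ≥ sup_min(G,h)`, the minimum `h`-support over all edges. -/
theorem HSup_ge_min_support {V : Type*} [Fintype V] (G : SimpleGraph V) (h : ℕ)
    (hh : 1 ≤ h) (hE : G.edgeSet.Nonempty) (n : ℕ) (e : Sym2 V) (he : e ∈ G.edgeSet) :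
    sInf {m | ∃ f ∈ G.edgeSet, m = hSupport G h f} ≤ HSup G h n e := by
  exact HSup_ge_min_support_aux G h n e he
end

section
/- (Upper bound at a fixed point) Suppose there exists N such that H^(n)sup(f) = H^(N)sup(f) for every edge f of G and every n ≥ N, and write L(f) = H^(N)sup(f). Then for every edge e of G, the subgraph G_s of G induced by the edge set {f : L(f) ≥ L(e)} ∪ {e} satisfies sup_{G_s}(f,h) ≥ L(e) for every edge f of G_s; consequently e belongs to an (L(e)+2, h)-truss of G and t(e,h) ≥ L(e) + 2. -/
lemma hIndex_spec (S : Multiset ℕ) :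
    hIndex S ≤ (S.filter (fun x => hIndex S ≤ x)).card := by
  have h0 : (0:ℕ) ∈ {y : ℕ | y ≤ (S.filter (fun x => y ≤ x)).card} := by simp
  have hbdd : BddAbove {y : ℕ | y ≤ (S.filter (fun x => y ≤ x)).card} :=
    ⟨Multiset.card S, fun y hy => hy.trans (Multiset.card_le_card (Multiset.filter_le _ _))⟩
  exact Nat.sSup_mem ⟨0, h0⟩ hbdd

/-- Upper bound at a fixed point: if the iterates have stabilized at
stage `N` with limits `L(f) = H^(N)sup(f)`, then for each edge `e` the subgraph `Gs`
induced by the edges `f` with `L(f) ≥ L(e)` together with `e` has every edge of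
`h`-support `≥ L(e)`; hence `e` lies in an `(L(e)+2, h)`-truss and `t(e,h) ≥ L(e)+2`. -/
theorem HSup_fixed_point_upper_bound {V : Type*} [Fintype V] (G : SimpleGraph V) (h : ℕ)
    (hh : 1 ≤ h) (N : ℕ)
    (hfix : ∀ f ∈ G.edgeSet, ∀ n, N ≤ n → HSup G h n f = HSup G h N f)
    (e : Sym2 V) (he : e ∈ G.edgeSet) :
    ∀ Gs : SimpleGraph V,
      Gs = SimpleGraph.fromEdgeSet
        ({f ∈ G.edgeSet | HSup G h N e ≤ HSup G h N f} ∪ {e}) →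
      (∀ f ∈ Gs.edgeSet, HSup G h N e ≤ hSupport Gs h f) ∧
      (∃ S : SimpleGraph V, IsKHTruss G S h (HSup G h N e + 2) ∧ e ∈ S.edgeSet) ∧
      HSup G h N e + 2 ≤ hTrussness G h e := by
  classical
  intro Gs hGs
  -- Step A: edge set of Gs
  have hGsE : Gs.edgeSet = {f | f ∈ G.edgeSet ∧ HSup G h N e ≤ HSup G h N f} := by
    rw [hGs, SimpleGraph.edgeSet_fromEdgeSet]
    ext f
    simp only [Set.mem_diff, Set.mem_union, Set.mem_setOf_eq, Set.mem_singleton_iff]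
    constructor
    · rintro ⟨hf | rfl, _⟩
      · exact hf
      · exact ⟨he, le_refl _⟩
    · intro hf
      exact ⟨Or.inl hf, G.not_isDiag_of_mem_edgeSet hf.1⟩
  -- Step B: claim 1
  have claim1 : ∀ f ∈ Gs.edgeSet, HSup G h N e ≤ hSupport Gs h f := by
    intro f hf
    rw [hGsE] at hf
    obtain ⟨hfG, hkf⟩ := hf
    rcases Nat.eq_zero_or_pos (HSup G h N e) with h0 | hpos
    · simp [h0]
    have hfx : hIndex ((commonHNbrs G h f).toFinite.toFinset.val.map
        (edgeKey G h (HSup G h N) f)) = HSup G h N f := hfix f hfG (N + 1) (Nat.le_succ N)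
    have hcard := hIndex_spec ((commonHNbrs G h f).toFinite.toFinset.val.map
        (edgeKey G h (HSup G h N) f))
    rw [hfx, Multiset.filter_map, Multiset.card_map] at hcard
    set T : Finset V := (commonHNbrs G h f).toFinite.toFinset.filter
        (fun w => HSup G h N f ≤ edgeKey G h (HSup G h N) f w) with hT
    have hTcard : HSup G h N f ≤ T.card := by
      rw [hT]
      convert hcard using 2
      rfl
    have hsub : ↑T ⊆ commonHNbrs Gs h f := by
      intro w hw
      rw [hT] at hw
      simp only [Finset.coe_filter, Set.mem_setOf_eq, Finset.mem_filter,
        Set.Finite.mem_toFinset] at hw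
      obtain ⟨hwG, hwk⟩ := hw
      intro x hx
      obtain ⟨hne, -⟩ := hwG x hx
      refine ⟨hne, ?_⟩
      have hpk : HSup G h N f ≤ pathKey G h (HSup G h N) x w :=
        le_trans hwk (Nat.sInf_le ⟨x, hx, rfl⟩)
      set M : Set ℕ := {m | ∃ p : G.Walk x w, 0 < p.length ∧ p.length ≤ h ∧
          m = sInf {y | ∃ g ∈ p.edges, y = HSup G h N g}} with hM
      have hBdd : BddAbove M := by
        refine ⟨Finset.univ.sup (HSup G h N), ?_⟩
        rintro m ⟨p, hp0, -, rfl⟩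
        obtain ⟨g, hg⟩ := List.exists_mem_of_length_pos
          (by rw [SimpleGraph.Walk.length_edges]; exact hp0)
        calc sInf {y | ∃ g' ∈ p.edges, y = HSup G h N g'} ≤ HSup G h N g :=
              Nat.sInf_le ⟨g, hg, rfl⟩
          _ ≤ _ := Finset.le_sup (Finset.mem_univ g)
      have hne' : M.Nonempty := by
        by_contra hc
        rw [Set.not_nonempty_iff_eq_empty] at hc
        have hz : pathKey G h (HSup G h N) x w = 0 := by
          rw [pathKey, ← hM, hc]; exact csSup_empty
        omega
      have hmem2 : pathKey G h (HSup G h N) x w ∈ M := by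
        rw [pathKey, ← hM]; exact Nat.sSup_mem hne' hBdd
      obtain ⟨p, hp0, hph, hps⟩ := hmem2
      have hedges : ∀ g ∈ p.edges, g ∈ Gs.edgeSet := by
        intro g hg
        rw [hGsE]
        refine ⟨p.edges_subset_edgeSet hg, ?_⟩
        have h1 : sInf {y | ∃ g' ∈ p.edges, y = HSup G h N g'} ≤ HSup G h N g :=
          Nat.sInf_le ⟨g, hg, rfl⟩
        rw [← hps] at h1
        omega
      exact ⟨p.transfer Gs hedges, by rw [SimpleGraph.Walk.length_transfer]; exact hph⟩
    calc HSup G h N e ≤ HSup G h N f := hkf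
      _ ≤ T.card := hTcard
      _ = (↑T : Set V).ncard := (Set.ncard_coe_finset _).symm
      _ ≤ (commonHNbrs Gs h f).ncard := Set.ncard_le_ncard hsub (Set.toFinite _)
  -- Step C: truss existence
  have hGsle : Gs ≤ G := by
    rw [← SimpleGraph.edgeSet_subset_edgeSet, hGsE]
    exact fun f hf => hf.1
  have heGs : e ∈ Gs.edgeSet := by rw [hGsE]; exact ⟨he, le_refl _⟩
  have hprop : KHTrussProp Gs h (HSup G h N e + 2) := by
    intro f hf
    have := claim1 f hf; omega
  set 𝒮 : Set (SimpleGraph V) :=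
    {T | T ≤ G ∧ KHTrussProp T h (HSup G h N e + 2) ∧ Gs ≤ T} with h𝒮
  obtain ⟨S, hS, hmax⟩ : ∃ S ∈ 𝒮, ∀ T ∈ 𝒮, id S ≤ id T → id S = id T := by
    obtain ⟨S, hSm⟩ := (Set.toFinite 𝒮).exists_maximal ⟨Gs, hGsle, hprop, le_refl _⟩
    exact ⟨S, hSm.prop, fun T hT hle => le_antisymm hle (hSm.2 hT hle)⟩
  have hStruss : IsKHTruss G S h (HSup G h N e + 2) := by
    refine ⟨hS.1, hS.2.1, fun T hT hTP hST => ?_⟩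
    exact (hmax T ⟨hT, hTP, le_trans hS.2.2 hST⟩ hST).symm
  have heS : e ∈ S.edgeSet := SimpleGraph.edgeSet_mono hS.2.2 heGs
  refine ⟨claim1, ⟨S, hStruss, heS⟩, ?_⟩
  -- Step D: trussness bound
  have hbdd : BddAbove {k | ∃ S : SimpleGraph V, IsKHTruss G S h k ∧ e ∈ S.edgeSet} := by
    refine ⟨Fintype.card V + 2, ?_⟩
    rintro k' ⟨S', ⟨-, hP, -⟩, heS'⟩
    have h1 := hP e heS'
    have h2 : hSupport S' h e ≤ Fintype.card V := by
      unfold hSupport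
      calc (commonHNbrs S' h e).ncard ≤ (Set.univ : Set V).ncard :=
            Set.ncard_le_ncard (Set.subset_univ _) (Set.toFinite _)
        _ = Fintype.card V := by rw [Set.ncard_univ, Nat.card_eq_fintype_card]
    omega
  exact le_csSup hbdd ⟨S, hStruss, heS⟩
end

section
/- (Subgraph monotonicity of the iterates) Let S be a subgraph of the finite simple graph G and let e be an edge of S. Then for every integer h ≥ 1 and every natural number n, the higher-order H-index iterate of e computed in G is at least the iterate of e computed in S: H^(n)sup_G(e) ≥ H^(n)sup_S(e), where the subscript indicates the graph in which common h-neighbors, paths of length ≤ h, path keys, and h-supports are computed. -/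
open SimpleGraph in
lemma my_commonHNbrs_mono {V : Type*} {G S : SimpleGraph V} (hSG : S ≤ G) (h : ℕ)
    (e : Sym2 V) : commonHNbrs S h e ⊆ commonHNbrs G h e := by
  intro w hw x hx
  obtain ⟨hne, p, hp⟩ := hw x hx
  exact ⟨hne, p.transfer G (fun f hf => SimpleGraph.edgeSet_mono hSG (p.edges_subset_edgeSet hf)),
    by rwa [Walk.length_transfer]⟩

open SimpleGraph in
lemma my_pathKey_bddAbove {V : Type*} [Fintype V] (G : SimpleGraph V) (h : ℕ)
    (F : Sym2 V → ℕ) (a b : V) :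
    BddAbove {m | ∃ p : G.Walk a b, 0 < p.length ∧ p.length ≤ h ∧
      m = sInf {x | ∃ f ∈ p.edges, x = F f}} := by
  classical
  refine ⟨Finset.univ.sup F, ?_⟩
  rintro m ⟨p, hp0, _, rfl⟩
  have hne : p.edges ≠ [] := by
    intro hnil
    have := p.length_edges
    rw [hnil] at this
    simp at this
    omega
  obtain ⟨f, hf⟩ := List.exists_mem_of_ne_nil _ hne
  exact le_trans (Nat.sInf_le ⟨f, hf, rfl⟩) (Finset.le_sup (Finset.mem_univ f))

open SimpleGraph in
lemma my_pathKey_mono {V : Type*} [Fintype V] {G S : SimpleGraph V} (hSG : S ≤ G) (h : ℕ)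
    {F F' : Sym2 V → ℕ} (hF : ∀ f ∈ S.edgeSet, F f ≤ F' f) (a b : V) :
    pathKey S h F a b ≤ pathKey G h F' a b := by
  classical
  apply csSup_le'
  rintro m ⟨p, hp0, hph, rfl⟩
  set q : G.Walk a b := p.transfer G (fun f hf => SimpleGraph.edgeSet_mono hSG (p.edges_subset_edgeSet hf)) with hqdef
  have hqe : q.edges = p.edges := p.edges_transfer _
  have hql : q.length = p.length := p.length_transfer _
  have hpe : p.edges ≠ [] := by
    intro hnil
    have := p.length_edges
    rw [hnil] at this
    simp at this
    omega
  have hmem : sInf {x | ∃ f ∈ q.edges, x = F' f} ∈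
      {m | ∃ p' : G.Walk a b, 0 < p'.length ∧ p'.length ≤ h ∧
        m = sInf {x | ∃ f ∈ p'.edges, x = F' f}} :=
    ⟨q, by omega, by omega, rfl⟩
  have hne' : {x | ∃ f ∈ q.edges, x = F' f}.Nonempty := by
    obtain ⟨f, hf⟩ := List.exists_mem_of_ne_nil _ hpe
    exact ⟨F' f, f, hqe ▸ hf, rfl⟩
  obtain ⟨f, hf, hfv⟩ := Nat.sInf_mem hne'
  have hfS : f ∈ S.edgeSet := p.edges_subset_edgeSet (hqe ▸ hf)
  have h1 : sInf {x | ∃ f ∈ p.edges, x = F f} ≤ F f :=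
    Nat.sInf_le ⟨f, hqe ▸ hf, rfl⟩
  calc sInf {x | ∃ f ∈ p.edges, x = F f} ≤ F' f := le_trans h1 (hF f hfS)
    _ = sInf {x | ∃ f ∈ q.edges, x = F' f} := hfv.symm
    _ ≤ _ := le_csSup (my_pathKey_bddAbove G h F' a b) hmem

open SimpleGraph in
lemma my_edgeKey_mono {V : Type*} [Fintype V] {G S : SimpleGraph V} (hSG : S ≤ G) (h : ℕ)
    {F F' : Sym2 V → ℕ} (hF : ∀ f ∈ S.edgeSet, F f ≤ F' f) (e : Sym2 V) (w : V) :
    edgeKey S h F e w ≤ edgeKey G h F' e w := by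
  have hne : {m | ∃ x ∈ e, m = pathKey G h F' x w}.Nonempty := by
    induction e using Sym2.ind with
    | _ u v => exact ⟨pathKey G h F' u w, u, by simp, rfl⟩
  obtain ⟨x, hx, hxv⟩ := Nat.sInf_mem hne
  calc edgeKey S h F e w ≤ pathKey S h F x w := Nat.sInf_le ⟨x, hx, rfl⟩
    _ ≤ pathKey G h F' x w := my_pathKey_mono hSG h hF x w
    _ = _ := hxv.symm

lemma my_hIndex_mono {S T : Multiset ℕ}
    (hc : ∀ y : ℕ, (S.filter (fun x => y ≤ x)).card ≤ (T.filter (fun x => y ≤ x)).card) :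
    hIndex S ≤ hIndex T := by
  apply csSup_le'
  intro y hy
  have hyT : y ≤ (T.filter (fun x => y ≤ x)).card := le_trans hy (hc y)
  refine le_csSup ⟨Multiset.card T, ?_⟩ hyT
  intro z hz
  exact le_trans hz (Multiset.card_le_card (Multiset.filter_le _ _))

theorem my_HSup_mono {V : Type*} [Fintype V] (G S : SimpleGraph V) (hSG : S ≤ G)
    (h : ℕ) (n : ℕ) : ∀ e : Sym2 V, HSup S h n e ≤ HSup G h n e := by
  classical
  induction n with
  | zero =>
    intro e
    exact Set.ncard_le_ncard (my_commonHNbrs_mono hSG h e) (Set.toFinite _)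
  | succ n ih =>
    intro e
    apply my_hIndex_mono
    intro y
    rw [Multiset.filter_map, Multiset.filter_map, Multiset.card_map, Multiset.card_map]
    have : ((commonHNbrs S h e).toFinite.toFinset.val.filter
        ((fun x => y ≤ x) ∘ edgeKey S h (HSup S h n) e)).card
        = (((commonHNbrs S h e).toFinite.toFinset).filter
            (fun w => y ≤ edgeKey S h (HSup S h n) e w)).card := rfl
    rw [this]
    have : ((commonHNbrs G h e).toFinite.toFinset.val.filter
        ((fun x => y ≤ x) ∘ edgeKey G h (HSup G h n) e)).card
        = (((commonHNbrs G h e).toFinite.toFinset).filter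
            (fun w => y ≤ edgeKey G h (HSup G h n) e w)).card := rfl
    rw [this]
    apply Finset.card_le_card
    intro w hw
    rw [Finset.mem_filter] at hw ⊢
    refine ⟨?_, ?_⟩
    · rw [Set.Finite.mem_toFinset] at hw ⊢
      exact my_commonHNbrs_mono hSG h e hw.1
    · exact le_trans hw.2 (my_edgeKey_mono hSG h (fun f _ => ih f) e w)

/-- Subgraph monotonicity: for a subgraph `S ≤ G` and an edge `e` of `S`,
the iterate of `e` computed in `G` is at least the iterate computed in `S`. -/
theorem HSup_subgraph_mono {V : Type*} [Fintype V] (G S : SimpleGraph V) (hSG : S ≤ G)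
    (h : ℕ) (hh : 1 ≤ h) (n : ℕ) (e : Sym2 V) (he : e ∈ S.edgeSet) :
    HSup S h n e ≤ HSup G h n e := my_HSup_mono G S hSG h n e
end

section
/- (Simple redundant-computation pruning) Fix n ≥ 2 and an edge e of G, and let E_G(e,h) denote the set of edges of G that lie on some path of length ≤ h from an endpoint of e to some common h-neighbor w ∈ △_G(e,h) (i.e., the edges whose values enter the computation of H^(n)sup(e)). If H^(n-2)sup(e') = H^(n-1)sup(e') for every edge e' ∈ E_G(e,h), then H^(n)sup(e) = H^(n-1)sup(e). -/
/-- Simple redundant-computation pruning: if, for every edge `e'` lying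
on some path of length `≤ h` from an endpoint of `e` to a common `h`-neighbor of `e`,
`H^(n-2)sup(e') = H^(n-1)sup(e')`, then `H^(n)sup(e) = H^(n-1)sup(e)`. -/
theorem HSup_pruning_simple {V : Type*} [Fintype V] (G : SimpleGraph V) (h : ℕ)
    (hh : 1 ≤ h) (n : ℕ) (hn : 2 ≤ n) (e : Sym2 V) (he : e ∈ G.edgeSet)
    (hstable : ∀ e' ∈ {f : Sym2 V | ∃ x ∈ e, ∃ w ∈ commonHNbrs G h e,
        ∃ p : G.Walk x w, p.length ≤ h ∧ f ∈ p.edges},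
      HSup G h (n - 2) e' = HSup G h (n - 1) e') :
    HSup G h n e = HSup G h (n - 1) e := by
  obtain ⟨m, rfl⟩ : ∃ m, n = m + 2 := ⟨n - 2, by omega⟩
  have hm2 : m + 2 - 2 = m := by omega
  have hm1 : m + 2 - 1 = m + 1 := by omega
  rw [hm2, hm1] at hstable
  rw [hm1]
  have key : ∀ w ∈ (commonHNbrs G h e).toFinite.toFinset,
      edgeKey G h (HSup G h (m+1)) e w = edgeKey G h (HSup G h m) e w := by
    intro w hw
    rw [Set.Finite.mem_toFinset] at hw
    unfold edgeKey
    have hpk : ∀ x ∈ e, pathKey G h (HSup G h (m+1)) x w = pathKey G h (HSup G h m) x w := by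
      intro x hx
      unfold pathKey
      congr 1
      ext s
      have hinf : ∀ p : G.Walk x w, p.length ≤ h →
          sInf {y | ∃ f ∈ p.edges, y = HSup G h (m+1) f}
            = sInf {y | ∃ f ∈ p.edges, y = HSup G h m f} := by
        intro p hp
        congr 1
        ext y
        constructor <;> rintro ⟨f, hf, rfl⟩ <;> refine ⟨f, hf, ?_⟩
        · exact (hstable f ⟨x, hx, w, hw, p, hp, hf⟩).symm
        · exact hstable f ⟨x, hx, w, hw, p, hp, hf⟩
      constructor <;> rintro ⟨p, h1, h2, rfl⟩ <;> first
        | exact ⟨p, h1, h2, hinf p h2⟩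
        | exact ⟨p, h1, h2, (hinf p h2).symm⟩
    congr 1
    ext t
    constructor <;> rintro ⟨x, hx, rfl⟩
    · exact ⟨x, hx, hpk x hx⟩
    · exact ⟨x, hx, (hpk x hx).symm⟩
  show hIndex _ = hIndex _
  congr 1
  exact Multiset.map_congr rfl (fun w hw => key w hw)
end

section
/- (Retrieval property of h-trussness) For every finite simple graph G, integer h ≥ 1, integer k ≥ 2, and edge e of G: e belongs to the (k,h)-truss of G if and only if t(e,h) ≥ k, where t(e,h) is the h-trussness of e. -/
/-- Retrieval property: an edge `e` belongs to the `(k,h)`-truss of `G`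
iff `t(e,h) ≥ k`. -/
theorem mem_khTruss_iff_trussness_ge {V : Type*} [Fintype V] (G : SimpleGraph V)
    (h k : ℕ) (hh : 1 ≤ h) (hk : 2 ≤ k) (e : Sym2 V) (he : e ∈ G.edgeSet) :
    (∃ S : SimpleGraph V, IsKHTruss G S h k ∧ e ∈ S.edgeSet) ↔ k ≤ hTrussness G h e := by
  have hbdd : BddAbove {k' | ∃ S : SimpleGraph V, IsKHTruss G S h k' ∧ e ∈ S.edgeSet} := by
    refine ⟨Nat.card V + 2, ?_⟩
    rintro k' ⟨S, ⟨-, hprop, -⟩, heS⟩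
    have h1 := hprop e heS
    have h2 : hSupport S h e ≤ Nat.card V := by
      have := Set.ncard_le_ncard (Set.subset_univ (commonHNbrs S h e)) Set.finite_univ
      simpa [hSupport, Set.ncard_univ] using this
    omega
  constructor
  · intro hex
    exact le_csSup hbdd hex
  · intro hle
    have hne : {k' | ∃ S : SimpleGraph V, IsKHTruss G S h k' ∧ e ∈ S.edgeSet}.Nonempty := by
      by_contra hemp
      rw [Set.not_nonempty_iff_eq_empty] at hemp
      rw [hTrussness, hemp, csSup_empty] at hle
      simp at hle
      omega
    obtain ⟨S, ⟨hSG, hSprop, -⟩, heS⟩ := Nat.sSup_mem hne hbdd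
    have hSk : KHTrussProp S h k := fun f hf => le_trans hle (hSprop f hf)
    obtain ⟨T, hTmem, hTmax⟩ := Set.Finite.exists_maximalFor id
      {T : SimpleGraph V | T ≤ G ∧ KHTrussProp T h k ∧ S ≤ T}
      (Set.toFinite _) ⟨S, hSG, hSk, le_rfl⟩
    obtain ⟨hTG, hTprop, hST⟩ := hTmem
    refine ⟨T, ⟨hTG, hTprop, fun T' hT'G hT'prop hTT' => ?_⟩,
      SimpleGraph.edgeSet_mono hST heS⟩
    exact le_antisymm (hTmax ⟨hT'G, hT'prop, hST.trans hTT'⟩ hTT') hTT'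
end
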